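/- arXiv:2108.02132 — 5 statements merged into one kernel-verified Lean document; each statement's English description precedes it below -/
import Mathlib

section
/- Each row of a product of k irreducible nonnegative N×N matrices with positive diagonal entries has at least min(k+1, N) positive entries; in particular, for 1 ≤ k ≤ N−1 each row has at least k+1 positive entries. -/
/-!
Let `S` be the set of indices of positive entries in row `i` of a nonnegative `P`, and let `B` be
irreducible and nonnegative with positive diagonal. The positive diagonal gives `S ⊆ S'`, where
`S'` is the row support of `P * B`. If `∅ ≠ S ≠ univ`, a path of positive entries of `B` from a
point of `S` to a point outside `S` has an edge `s → t` leaving `S`, and then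
`(P * B) i t ≥ P i s * B s t > 0`, so `S'` is strictly larger. Starting from the identity, each
factor therefore adds a positive entry until the row is full.
-/

/-- A nonnegative square matrix is irreducible: any two indices are joined by a
path of positive entries. -/
def Irred {N : ℕ} (A : Matrix (Fin N) (Fin N) ℝ) : Prop :=
  ∀ i j : Fin N, ∃ n : ℕ, ∃ c : Fin (n + 1) → Fin N,
    c 0 = i ∧ c (Fin.last n) = j ∧ ∀ m : Fin n, 0 < A (c m.castSucc) (c m.succ)

theorem Fin.exists_castSucc_succ_not {n : ℕ} {p : Fin (n + 1) → Prop}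
    (h0 : p 0) (hlast : ¬ p (Fin.last n)) : ∃ m : Fin n, p m.castSucc ∧ ¬ p m.succ := by
  by_contra! h
  exact hlast (Fin.induction h0 h (Fin.last n))

namespace Matrix

variable {n R : Type*} [Fintype n]

section Support

variable [Zero R] [LT R] [DecidableLT R]

def rowSupport (M : Matrix n n R) (i : n) : Finset n :=
  Finset.univ.filter fun j => 0 < M i j

@[simp]
theorem mem_rowSupport {M : Matrix n n R} {i j : n} : j ∈ rowSupport M i ↔ 0 < M i j := by
  simp [rowSupport]

end Support

theorem list_prod_nonneg [DecidableEq n] [Semiring R] [PartialOrder R] [IsOrderedRing R]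
    {l : List (Matrix n n R)} (h : ∀ M ∈ l, ∀ i j, 0 ≤ M i j) (i j : n) : 0 ≤ l.prod i j := by
  induction l generalizing i with
  | nil =>
    rw [List.prod_nil, one_apply]
    split_ifs <;> simp
  | cons M l ih =>
    rw [List.prod_cons, mul_apply]
    exact Finset.sum_nonneg fun s _ => mul_nonneg (h M List.mem_cons_self i s)
      (ih (fun M' hM' => h M' (List.mem_cons_of_mem _ hM')) s)

section StrictOrderedSemiring

variable [Semiring R] [PartialOrder R] [IsStrictOrderedRing R]

theorem mul_apply_pos {P B : Matrix n n R} (hP : ∀ i j, 0 ≤ P i j) (hB : ∀ i j, 0 ≤ B i j)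
    {i s j : n} (hPis : 0 < P i s) (hBsj : 0 < B s j) : 0 < (P * B) i j :=
  Finset.sum_pos' (fun t _ => mul_nonneg (hP i t) (hB t j))
    ⟨s, Finset.mem_univ s, mul_pos hPis hBsj⟩

theorem rowSupport_subset_rowSupport_mul [DecidableLT R] {P B : Matrix n n R}
    (hP : ∀ i j, 0 ≤ P i j) (hB : ∀ i j, 0 ≤ B i j) (hBdiag : ∀ j, 0 < B j j) (i : n) :
    rowSupport P i ⊆ rowSupport (P * B) i := by
  intro j hj
  rw [mem_rowSupport] at hj ⊢
  exact mul_apply_pos hP hB hj (hBdiag j)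

end StrictOrderedSemiring

end Matrix

open Matrix

theorem rowSupport_ssubset_rowSupport_mul {N : ℕ} {P B : Matrix (Fin N) (Fin N) ℝ}
    (hP : ∀ i j, 0 ≤ P i j) (hB : ∀ i j, 0 ≤ B i j) (hBdiag : ∀ j, 0 < B j j) (hBirr : Irred B)
    {i : Fin N} (hne : (rowSupport P i).Nonempty) (hnuniv : rowSupport P i ≠ Finset.univ) :
    rowSupport P i ⊂ rowSupport (P * B) i := by
  set S := rowSupport P i
  obtain ⟨s, hs⟩ := hne
  obtain ⟨t, ht⟩ : ∃ t, t ∉ S := by simpa [Finset.eq_univ_iff_forall] using hnuniv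
  obtain ⟨len, c, rfl, rfl, hc⟩ := hBirr s t
  obtain ⟨m, hmS, hmS'⟩ := Fin.exists_castSucc_succ_not (p := fun m => c m ∈ S) hs ht
  refine Finset.ssubset_iff_of_subset (rowSupport_subset_rowSupport_mul hP hB hBdiag i)
    |>.mpr ⟨c m.succ, ?_, hmS'⟩
  rw [mem_rowSupport] at hmS ⊢
  exact mul_apply_pos hP hB hmS (hc m)

theorem min_card_rowSupport_add_one_le {N : ℕ} {P B : Matrix (Fin N) (Fin N) ℝ}
    (hP : ∀ i j, 0 ≤ P i j) (hB : ∀ i j, 0 ≤ B i j) (hBdiag : ∀ j, 0 < B j j) (hBirr : Irred B)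
    {i : Fin N} (hne : (rowSupport P i).Nonempty) :
    min ((rowSupport P i).card + 1) N ≤ (rowSupport (P * B) i).card := by
  by_cases huniv : rowSupport P i = Finset.univ
  · have hsub := rowSupport_subset_rowSupport_mul hP hB hBdiag i
    rw [huniv, Finset.univ_subset_iff] at hsub
    simp [hsub]
  · exact min_le_of_left_le <|
      Finset.card_lt_card (rowSupport_ssubset_rowSupport_mul hP hB hBdiag hBirr hne huniv)

theorem min_length_add_one_le_card_rowSupport_prod {N : ℕ} (l : List (Matrix (Fin N) (Fin N) ℝ))
    (hnn : ∀ M ∈ l, ∀ i j, 0 ≤ M i j) (hirr : ∀ M ∈ l, Irred M)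
    (hdiag : ∀ M ∈ l, ∀ i, 0 < M i i) (i : Fin N) :
    min (l.length + 1) N ≤ (rowSupport l.prod i).card := by
  induction l using List.reverseRecOn with
  | nil =>
    exact min_le_of_left_le (Finset.card_pos.mpr ⟨i, by simp⟩)
  | append_singleton l M ih =>
    simp only [List.mem_append, List.mem_singleton] at hnn hirr hdiag
    have ih := ih (fun M h => hnn M (.inl h)) (fun M h => hirr M (.inl h))
      (fun M h => hdiag M (.inl h))
    have hne : (rowSupport l.prod i).Nonempty := by
      rw [← Finset.card_pos]
      have := i.pos
      omega
    have hstep := min_card_rowSupport_add_one_le (list_prod_nonneg fun M h => hnn M (.inl h))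
      (hnn M (.inr rfl)) (hdiag M (.inr rfl)) (hirr M (.inr rfl)) hne
    rw [List.prod_append, List.prod_singleton, List.length_append, List.length_singleton]
    omega

theorem row_positive_entries_of_prod_irreducible {N k : ℕ}
    (A : Fin k → Matrix (Fin N) (Fin N) ℝ)
    (hnn : ∀ l i j, 0 ≤ A l i j) (hirr : ∀ l, Irred (A l))
    (hdiag : ∀ l i, 0 < A l i i) :
    ∀ i : Fin N,
      min (k + 1) N ≤ (Finset.univ.filter fun j => 0 < (List.ofFn A).prod i j).card := by
  intro i
  simpa [rowSupport] using min_length_add_one_le_card_rowSupport_prod (List.ofFn A)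
    (by simpa using hnn) (by simpa using hirr) (by simpa using hdiag) i
end

section
/- Let {P(t)}_{t≥0} be N×N row-stochastic matrices whose nonzero entries are uniformly bounded below by p⁺ > 0, and suppose each vertex has a self-loop (positive diagonal entries) and there exists t₀ ∈ ℕ such that for all t ≥ 0 the union over t ≤ s < t+t₀ of the directed graphs G(s) (with edge (i,j) iff p_{ij}(s) > 0) is strongly connected. Then there exists T ∈ ℕ (one can take T = (N−1)t₀) such that P(t+T,t) > 0 entrywise for all t ≥ 0. -/
/-! Fix the target column `j` and let `R k` be the set of rows `i` with `P(t+k, t) i j > 0`.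
Because of the self-loops `R k` only grows with `k`, and it contains `j` from the start. If `R k`
is not everything, a path of the window `[t+k, t+k+t₀)` from a row outside `R k` to `j` has an
edge `a → b` entering `R k`; using it at its time `s` puts `a` into `R (s - t + 1) ⊆ R (k + t₀)`.
So `R` gains a row every `t₀` steps and is everything after `(N - 1) t₀` steps. -/

/-- Backward product: `bprod P t₀ k = P(t₀+k-1) ⋯ P(t₀+1) P(t₀)`, i.e. `P(t₀+k, t₀)`. -/
def bprod {N : ℕ} (P : ℕ → Matrix (Fin N) (Fin N) ℝ) (t₀ : ℕ) : ℕ → Matrix (Fin N) (Fin N) ℝ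
  | 0 => 1
  | k + 1 => P (t₀ + k) * bprod P t₀ k

open Finset

theorem Fin.exists_not_castSucc_and_succ {α : Type*} (p : α → Prop) :
    ∀ (n : ℕ) (c : Fin (n + 1) → α), ¬ p (c 0) → p (c (Fin.last n)) →
      ∃ m : Fin n, ¬ p (c m.castSucc) ∧ p (c m.succ)
  | 0, _, h0, hlast => absurd hlast h0
  | n + 1, c, h0, hlast => by
    by_cases h1 : p (c 1)
    · exact ⟨0, h0, h1⟩
    · obtain ⟨m, hm⟩ := exists_not_castSucc_and_succ p n (fun i => c i.succ) h1 hlast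
      exact ⟨m.succ, hm⟩

theorem Finset.eq_univ_of_ssubset_add {α : Type*} [Fintype α] (R : ℕ → Finset α) (d : ℕ)
    (hmono : Monotone R) (h0 : (R 0).Nonempty) (hgrow : ∀ k, R k ≠ univ → R k ⊂ R (k + d)) :
    R ((Fintype.card α - 1) * d) = univ := by
  have hcard : ∀ n, R (n * d) = univ ∨ n + 1 ≤ #(R (n * d)) := by
    intro n
    induction n with
    | zero => exact .inr (by simpa using h0.card_pos)
    | succ n ih =>
      by_cases huniv : R (n * d) = univ
      · exact .inl (univ_subset_iff.mp (huniv ▸ hmono (Nat.mul_le_mul_right d n.le_succ)))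
      · have hlt := card_lt_card (hgrow _ huniv)
        rw [Nat.succ_mul]
        exact .inr (by have := ih.resolve_left huniv; omega)
  rcases hcard (Fintype.card α - 1) with h | h
  · exact h
  · exact eq_univ_of_card _ (le_antisymm (card_le_univ _) (by omega))

section bprod

variable {N : ℕ} {P : ℕ → Matrix (Fin N) (Fin N) ℝ}

theorem bprod_succ_apply (P : ℕ → Matrix (Fin N) (Fin N) ℝ) (t k : ℕ) (i j : Fin N) :
    bprod P t (k + 1) i j = ∑ m, P (t + k) i m * bprod P t k m j :=
  Matrix.mul_apply

theorem bprod_nonneg (hP : ∀ t i j, 0 ≤ P t i j) (t : ℕ) :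
    ∀ k i j, 0 ≤ bprod P t k i j
  | 0, i, j => by
    rw [bprod, Matrix.one_apply]
    split_ifs <;> norm_num
  | k + 1, i, j => (bprod_succ_apply P t k i j).symm ▸
    sum_nonneg fun m _ => mul_nonneg (hP _ _ _) (bprod_nonneg hP t k m j)

theorem bprod_succ_pos (hP : ∀ t i j, 0 ≤ P t i j) {t k : ℕ} {i m j : Fin N}
    (him : 0 < P (t + k) i m) (hmj : 0 < bprod P t k m j) :
    0 < bprod P t (k + 1) i j :=
  (bprod_succ_apply P t k i j).symm ▸
    sum_pos' (fun x _ => mul_nonneg (hP _ _ _) (bprod_nonneg hP t k x j))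
      ⟨m, mem_univ m, mul_pos him hmj⟩

theorem bprod_pos_mono (hP : ∀ t i j, 0 ≤ P t i j) (hdiag : ∀ t i, 0 < P t i i)
    {t k k' : ℕ} (hk : k ≤ k') {i j : Fin N} (h : 0 < bprod P t k i j) :
    0 < bprod P t k' i j := by
  induction k', hk using Nat.le_induction with
  | base => exact h
  | succ k' _ ih => exact bprod_succ_pos hP (hdiag _ _) ih

theorem bprod_self_pos (hP : ∀ t i j, 0 ≤ P t i j) (hdiag : ∀ t i, 0 < P t i i)
    (t k : ℕ) (j : Fin N) : 0 < bprod P t k j j :=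
  bprod_pos_mono hP hdiag k.zero_le (by simp [bprod])

noncomputable def reachSet (P : ℕ → Matrix (Fin N) (Fin N) ℝ) (t : ℕ) (j : Fin N) (k : ℕ) :
    Finset (Fin N) :=
  {i | 0 < bprod P t k i j}

theorem mem_reachSet {t k : ℕ} {i j : Fin N} : i ∈ reachSet P t j k ↔ 0 < bprod P t k i j := by
  simp [reachSet]

theorem reachSet_monotone (hP : ∀ t i j, 0 ≤ P t i j) (hdiag : ∀ t i, 0 < P t i i)
    (t : ℕ) (j : Fin N) : Monotone (reachSet P t j) := fun _ _ hk _ hi =>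
  mem_reachSet.mpr (bprod_pos_mono hP hdiag hk (mem_reachSet.mp hi))

theorem reachSet_ssubset_add (hP : ∀ t i j, 0 ≤ P t i j) (hdiag : ∀ t i, 0 < P t i i)
    {t t₀ k n : ℕ} {j u : Fin N} (hu : u ∉ reachSet P t j k) (c : Fin (n + 1) → Fin N)
    (hc0 : c 0 = u) (hclast : c (Fin.last n) = j)
    (hc : ∀ m : Fin n, ∃ s, t + k ≤ s ∧ s < t + k + t₀ ∧ 0 < P s (c m.castSucc) (c m.succ)) :
    reachSet P t j k ⊂ reachSet P t j (k + t₀) := by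
  have hR := reachSet_monotone hP hdiag t j
  have hj : c (Fin.last n) ∈ reachSet P t j k := by
    rw [hclast]; exact mem_reachSet.mpr (bprod_self_pos hP hdiag t k j)
  obtain ⟨m, hm_out, hm_in⟩ :=
    Fin.exists_not_castSucc_and_succ (· ∈ reachSet P t j k) n c (hc0 ▸ hu) hj
  obtain ⟨s, hks, hst₀, hedge⟩ := hc m
  have hb : 0 < bprod P t (s - t) (c m.succ) j := mem_reachSet.mp (hR (by omega) hm_in)
  have ha : c m.castSucc ∈ reachSet P t j (s - t + 1) :=
    mem_reachSet.mpr (bprod_succ_pos hP (by rwa [Nat.add_sub_cancel' (by omega)]) hb)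
  exact ssubset_iff_of_subset (hR (Nat.le_add_right k t₀)) |>.mpr
    ⟨c m.castSucc, hR (by omega) ha, hm_out⟩

theorem bprod_pos_of_window_connected (hP : ∀ t i j, 0 ≤ P t i j) (hdiag : ∀ t i, 0 < P t i i)
    (t₀ : ℕ)
    (hconn : ∀ t : ℕ, ∀ i j : Fin N, ∃ n : ℕ, ∃ c : Fin (n + 1) → Fin N,
      c 0 = i ∧ c (Fin.last n) = j ∧
      ∀ m : Fin n, ∃ s : ℕ, t ≤ s ∧ s < t + t₀ ∧ 0 < P s (c m.castSucc) (c m.succ))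
    {t k : ℕ} (hk : (N - 1) * t₀ ≤ k) (i j : Fin N) : 0 < bprod P t k i j := by
  have hR := reachSet_monotone hP hdiag t j
  have hfull : reachSet P t j ((N - 1) * t₀) = univ := by
    simpa using Finset.eq_univ_of_ssubset_add (reachSet P t j) t₀ hR
      ⟨j, mem_reachSet.mpr (bprod_self_pos hP hdiag t 0 j)⟩ fun k hne => by
        obtain ⟨u, hu⟩ := not_forall.mp (mt eq_univ_iff_forall.mpr hne)
        obtain ⟨n, c, hc0, hclast, hc⟩ := hconn (t + k) u j
        exact reachSet_ssubset_add hP hdiag hu c hc0 hclast hc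
  exact mem_reachSet.mp (hR hk (hfull ▸ mem_univ i))

end bprod

theorem union_strongly_connected_implies_positive_product_general {N : ℕ}
    (P : ℕ → Matrix (Fin N) (Fin N) ℝ)
    (hrs : ∀ t, (∀ i j, 0 ≤ P t i j) ∧ ∀ i, ∑ j, P t i j = 1)
    (hdiag : ∀ t i, 0 < P t i i)
    (t₀ : ℕ)
    (hconn : ∀ t : ℕ, ∀ i j : Fin N, ∃ n : ℕ, ∃ c : Fin (n + 1) → Fin N,
      c 0 = i ∧ c (Fin.last n) = j ∧
      ∀ m : Fin n, ∃ s : ℕ, t ≤ s ∧ s < t + t₀ ∧ 0 < P s (c m.castSucc) (c m.succ)) :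
    ∃ T : ℕ, 0 < T ∧ ∀ t : ℕ, ∀ i j : Fin N, 0 < bprod P t T i j :=
  ⟨(N - 1) * t₀ + 1, Nat.succ_pos _, fun _ =>
    bprod_pos_of_window_connected (fun t => (hrs t).1) hdiag t₀ hconn (Nat.le_succ _)⟩

theorem union_strongly_connected_implies_positive_product {N : ℕ} (hN : 0 < N)
    (P : ℕ → Matrix (Fin N) (Fin N) ℝ) (pplus : ℝ) (hp : 0 < pplus)
    (hrs : ∀ t, (∀ i j, 0 ≤ P t i j) ∧ ∀ i, ∑ j, P t i j = 1)
    (hlow : ∀ t i j, P t i j ≠ 0 → pplus ≤ P t i j)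
    (hdiag : ∀ t i, 0 < P t i i)
    (t₀ : ℕ) (ht₀ : 0 < t₀)
    (hconn : ∀ t : ℕ, ∀ i j : Fin N, ∃ n : ℕ, ∃ c : Fin (n + 1) → Fin N,
      c 0 = i ∧ c (Fin.last n) = j ∧
      ∀ m : Fin n, ∃ s : ℕ, t ≤ s ∧ s < t + t₀ ∧ 0 < P s (c m.castSucc) (c m.succ)) :
    ∃ T : ℕ, 0 < T ∧ ∀ t : ℕ, ∀ i j : Fin N, 0 < bprod P t T i j :=
  union_strongly_connected_implies_positive_product_general P hrs hdiag t₀ hconn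
end

section
/- Let {P(t)}_{t≥0} be N×N row-stochastic matrices satisfying τ(P(t,t₀)) ≤ Cλ^{t−t₀} for constants C > 0, 0 < λ < 1, and suppose the gradients G(t) ∈ ℝ^{N×d} satisfy sup_t ‖G(t)‖_∞ ≤ L and the nonnegative diagonal matrices Δ(t) satisfy sup_t ‖Δ(t)‖_∞ < ∞. If X(t+1) = P(t)X(t) − Δ(t)G(t) and b(t) ∈ ℝ^N are vectors with sup_t ‖b(t)‖₁ < ∞ and b(t)^⊤ 1_N = 0, then ‖X(t)^⊤ b(t)‖₁ ≤ C'λ^t + C'·Σ_{k=0}^{t−1} λ^{t−k−1}‖Δ(k)‖_∞ for some constant C' > 0 independent of t ≥ 1. -/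
noncomputable def tau {N : ℕ} (P : Matrix (Fin N) (Fin N) ℝ) : ℝ :=
  (1 / 2) * ⨆ p : Fin N × Fin N, ∑ j, |P p.1 j - P p.2 j|

/-!
Unrolling the recursion gives `X(t) = P(t,0) X(0) - ∑_{k<t} P(t,k+1) Δ(k) G(k)`, so `X(t)ᵀ b(t)` is
a sum of terms `Yᵀ (P(t,r)ᵀ b(t))` with `Y = X(0)` or `Y = Δ(k) G(k)`. Each such term is at most
`‖P(t,r)ᵀ b(t)‖₁` times the largest row sum of `|Y|`, and since `b(t)` sums to zero,
`‖P(t,r)ᵀ b(t)‖₁ ≤ τ(P(t,r)) ‖b(t)‖₁ ≤ C λ^{t-r} B`. This contraction holds because a zero-sum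
vector `u` with `s = ∑ u⁺` satisfies `s u = ∑_{p,q} u⁺_p u⁻_q (e_p - e_q)`, while
`‖Qᵀ (e_p - e_q)‖₁ ≤ 2 τ(Q)`.
-/

open Matrix Finset

section

variable {ι κ : Type*} [Fintype ι]

lemma sum_posPart_eq_sum_negPart {u : ι → ℝ} (hu : ∑ i, u i = 0) :
    ∑ i, (u i)⁺ = ∑ i, (u i)⁻ := by
  have h : ∑ i, ((u i)⁺ - (u i)⁻) = 0 := by simpa only [posPart_sub_negPart] using hu
  rwa [sum_sub_distrib, sub_eq_zero] at h

lemma sum_abs_eq_two_mul_sum_posPart {u : ι → ℝ} (hu : ∑ i, u i = 0) :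
    ∑ i, |u i| = 2 * ∑ i, (u i)⁺ := by
  simp_rw [← posPart_add_negPart, sum_add_distrib, ← sum_posPart_eq_sum_negPart hu]
  ring

lemma sum_posPart_mul_vecMul {u : ι → ℝ} (hu : ∑ i, u i = 0) (Q : Matrix ι κ ℝ) (j : κ) :
    (∑ i, (u i)⁺) * (u ᵥ* Q) j = ∑ p, ∑ q, (u p)⁺ * (u q)⁻ * (Q p j - Q q j) := by
  calc (∑ i, (u i)⁺) * (u ᵥ* Q) j
      = (∑ p, (u p)⁺ * Q p j) * ∑ q, (u q)⁻ - (∑ p, (u p)⁺) * ∑ q, (u q)⁻ * Q q j := by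
        have hsplit : (u ᵥ* Q) j = ∑ p, (u p)⁺ * Q p j - ∑ q, (u q)⁻ * Q q j := by
          rw [← sum_sub_distrib]
          exact sum_congr rfl fun i _ => by rw [← sub_mul, posPart_sub_negPart]
        rw [hsplit, ← sum_posPart_eq_sum_negPart hu]
        ring
    _ = ∑ p, ∑ q, (u p)⁺ * (u q)⁻ * (Q p j - Q q j) := by
        simp_rw [sum_mul_sum, ← sum_sub_distrib]
        congr! 2 with p - q
        ring

lemma sum_abs_vecMul_le [Fintype κ] (w : ι → ℝ) {Y : Matrix ι κ ℝ}
    {K : ℝ} (hY : ∀ i, ∑ l, |Y i l| ≤ K) :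
    ∑ l, |(w ᵥ* Y) l| ≤ (∑ i, |w i|) * K :=
  calc ∑ l, |(w ᵥ* Y) l| ≤ ∑ l, ∑ i, |w i| * |Y i l| :=
        sum_le_sum fun l _ => (abs_sum_le_sum_abs _ _).trans_eq (by simp_rw [abs_mul])
    _ = ∑ i, |w i| * ∑ l, |Y i l| := by rw [sum_comm]; simp_rw [mul_sum]
    _ ≤ (∑ i, |w i|) * K := by
        rw [sum_mul]
        gcongr with i
        exact hY i

lemma sum_abs_diagonal_mul_le [Fintype κ] [DecidableEq ι] {δ : ι → ℝ} (hδ : ∀ i, 0 ≤ δ i)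
    {G : Matrix ι κ ℝ} {L : ℝ} (hG : ∀ i, ∑ l, |G i l| ≤ L) (i : ι) :
    ∑ l, |(diagonal δ * G) i l| ≤ (⨆ i, δ i) * L := by
  simp_rw [diagonal_mul, abs_mul, abs_of_nonneg (hδ i), ← mul_sum]
  exact mul_le_mul (le_ciSup (Set.finite_range δ).bddAbove i) (hG i) (by positivity)
    (Real.iSup_nonneg hδ)

end

section

variable {N : ℕ}

lemma sum_abs_sub_le_two_mul_tau (Q : Matrix (Fin N) (Fin N) ℝ) (p q : Fin N) :
    ∑ j, |Q p j - Q q j| ≤ 2 * tau Q := by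
  have h := le_ciSup (f := fun r : Fin N × Fin N => ∑ j, |Q r.1 j - Q r.2 j|)
    (Set.finite_range _).bddAbove (p, q)
  rw [tau]
  linarith

theorem sum_abs_vecMul_le_tau_mul {u : Fin N → ℝ} (hu : ∑ i, u i = 0)
    (Q : Matrix (Fin N) (Fin N) ℝ) :
    ∑ j, |(u ᵥ* Q) j| ≤ tau Q * ∑ i, |u i| := by
  set s := ∑ i, (u i)⁺ with hs
  rcases (sum_nonneg fun i _ => posPart_nonneg (u i) : 0 ≤ s).eq_or_lt with hs0 | hspos
  · have hu0 : u = 0 := by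
      ext i
      have h := sum_abs_eq_two_mul_sum_posPart hu
      rw [← hs0, mul_zero, sum_eq_zero_iff_of_nonneg fun i _ => abs_nonneg (u i)] at h
      exact abs_eq_zero.mp (h i (mem_univ i))
    simp [hu0]
  refine le_of_mul_le_mul_left ?_ hspos
  calc s * ∑ j, |(u ᵥ* Q) j|
      = ∑ j, |∑ p, ∑ q, (u p)⁺ * (u q)⁻ * (Q p j - Q q j)| := by
        rw [mul_sum]
        congr! 1 with j
        rw [← sum_posPart_mul_vecMul hu, abs_mul, abs_of_pos hspos]
    _ ≤ ∑ j, ∑ p, ∑ q, (u p)⁺ * (u q)⁻ * |Q p j - Q q j| := by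
        gcongr with j
        refine (abs_sum_le_sum_abs _ _).trans (sum_le_sum fun p _ => ?_)
        refine (abs_sum_le_sum_abs _ _).trans_eq (sum_congr rfl fun q _ => ?_)
        rw [abs_mul, abs_of_nonneg (by positivity)]
    _ = ∑ p, ∑ q, (u p)⁺ * (u q)⁻ * ∑ j, |Q p j - Q q j| := by
        simp_rw [mul_sum]
        rw [sum_comm]
        exact sum_congr rfl fun p _ => sum_comm
    _ ≤ ∑ p, ∑ q, (u p)⁺ * (u q)⁻ * (2 * tau Q) := by
        gcongr with p _ q
        exact sum_abs_sub_le_two_mul_tau Q p q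
    _ = s * (tau Q * ∑ i, |u i|) := by
        rw [sum_abs_eq_two_mul_sum_posPart hu]
        simp_rw [← sum_mul, ← mul_sum, ← sum_mul, ← sum_posPart_eq_sum_negPart hu, ← hs]
        ring

lemma bprod_sub_succ (P : ℕ → Matrix (Fin N) (Fin N) ℝ) {k t : ℕ} (hk : k < t) :
    bprod P (k + 1) (t - k) = P t * bprod P (k + 1) (t - k - 1) := by
  obtain ⟨j, rfl⟩ := Nat.exists_eq_add_of_lt hk
  rw [show k + j + 1 - k = j + 1 by omega, show j + 1 - 1 = j by omega, bprod,
    show k + 1 + j = k + j + 1 by omega]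

theorem eq_bprod_mul_sub_sum {m : Type*} (P : ℕ → Matrix (Fin N) (Fin N) ℝ)
    (X U : ℕ → Matrix (Fin N) m ℝ) (hX : ∀ t, X (t + 1) = P t * X t - U t) (t : ℕ) :
    X t = bprod P 0 t * X 0 - ∑ k ∈ range t, bprod P (k + 1) (t - k - 1) * U k := by
  induction t with
  | zero => simp [bprod]
  | succ t ih =>
    have hterms : ∀ k ∈ range t, bprod P (k + 1) (t + 1 - k - 1) * U k
        = P t * (bprod P (k + 1) (t - k - 1) * U k) := fun k hk => by
      rw [show t + 1 - k - 1 = t - k by omega, bprod_sub_succ P (mem_range.mp hk),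
        Matrix.mul_assoc]
    rw [hX, ih, sum_range_succ, sum_congr rfl hterms, ← Matrix.mul_sum,
      show t + 1 - t - 1 = 0 by omega, bprod, bprod, Matrix.one_mul, zero_add,
      Matrix.mul_sub, Matrix.mul_assoc, sub_sub]

theorem sum_abs_vecMul_le_of_eq_mul_sub {m : Type*} [Fintype m]
    (P : ℕ → Matrix (Fin N) (Fin N) ℝ) {X U : ℕ → Matrix (Fin N) m ℝ}
    (hX : ∀ t, X (t + 1) = P t * X t - U t) (u : Fin N → ℝ) {K₀ : ℝ} {R : ℕ → ℝ}
    (hX₀ : ∀ j, ∑ l, |X 0 j l| ≤ K₀) (hU : ∀ k i, ∑ l, |U k i l| ≤ R k) (t : ℕ) :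
    ∑ l, |(u ᵥ* X t) l| ≤ (∑ j, |(u ᵥ* bprod P 0 t) j|) * K₀
      + ∑ k ∈ range t, (∑ j, |(u ᵥ* bprod P (k + 1) (t - k - 1)) j|) * R k :=
  calc ∑ l, |(u ᵥ* X t) l|
      ≤ ∑ l, |((u ᵥ* bprod P 0 t) ᵥ* X 0) l|
        + ∑ k ∈ range t, ∑ l, |((u ᵥ* bprod P (k + 1) (t - k - 1)) ᵥ* U k) l| := by
        rw [eq_bprod_mul_sub_sum P X U hX t, vecMul_sub, vecMul_sum, ← sum_comm,
          ← sum_add_distrib]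
        refine sum_le_sum fun l _ => ?_
        simp_rw [vecMul_vecMul]
        rw [Pi.sub_apply, Finset.sum_apply]
        exact (abs_sub _ _).trans (by gcongr; exact abs_sum_le_sum_abs _ _)
    _ ≤ _ := by
        gcongr with k
        exacts [sum_abs_vecMul_le _ hX₀, sum_abs_vecMul_le _ (hU k)]

end

theorem disagreement_bound_general {N d : ℕ} (hN : 0 < N)
    (P : ℕ → Matrix (Fin N) (Fin N) ℝ)
    (C lam : ℝ) (hC : 0 < C) (hlam0 : 0 < lam)
    (htau : ∀ t₀ k : ℕ, tau (bprod P t₀ k) ≤ C * lam ^ k)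
    (X G : ℕ → Matrix (Fin N) (Fin d) ℝ) (L : ℝ)
    (hG : ∀ t i, ∑ j, |G t i j| ≤ L)
    (Δ : ℕ → Fin N → ℝ) (hΔ : ∀ t i, 0 ≤ Δ t i)
    (hX : ∀ t i l, X (t + 1) i l = (∑ j, P t i j * X t j l) - Δ t i * G t i l)
    (b : ℕ → Fin N → ℝ) (B : ℝ)
    (hb1 : ∀ t, ∑ i, |b t i| ≤ B)
    (hb0 : ∀ t, ∑ i, b t i = 0) :
    ∃ C' : ℝ, 0 < C' ∧ ∀ t : ℕ, 1 ≤ t →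
      (∑ l, |∑ i, X t i l * b t i|) ≤
        C' * lam ^ t + C' * ∑ k ∈ Finset.range t, lam ^ (t - k - 1) * (⨆ i, Δ k i) := by
  set K₀ := ∑ j, ∑ l, |X 0 j l|
  have hB : 0 ≤ B := (sum_nonneg fun i _ => abs_nonneg _).trans (hb1 0)
  have hL : 0 ≤ L := (sum_nonneg fun j _ => abs_nonneg _).trans (hG 0 ⟨0, hN⟩)
  have hX₀ : ∀ j, ∑ l, |X 0 j l| ≤ K₀ := fun j =>
    single_le_sum (f := fun j => ∑ l, |X 0 j l|) (fun j _ => by positivity) (mem_univ j)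
  have hcontr : ∀ t t₀ k, ∑ j, |(b t ᵥ* bprod P t₀ k) j| ≤ C * lam ^ k * B := fun t t₀ k =>
    (sum_abs_vecMul_le_tau_mul (hb0 t) _).trans
      (mul_le_mul (htau t₀ k) (hb1 t) (by positivity) (by positivity))
  have hrec : ∀ t, X (t + 1) = P t * X t - diagonal (Δ t) * G t := fun t => by
    ext i l
    rw [hX, Matrix.sub_apply, mul_apply, diagonal_mul]
  refine ⟨C * B * K₀ + C * B * L + 1, by positivity, fun t _ => ?_⟩
  have hS : 0 ≤ ∑ k ∈ range t, lam ^ (t - k - 1) * (⨆ i, Δ k i) :=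
    sum_nonneg fun k _ => mul_nonneg (by positivity) (Real.iSup_nonneg (hΔ k))
  calc ∑ l, |∑ i, X t i l * b t i| = ∑ l, |(b t ᵥ* X t) l| := by
        simp only [← mulVec_transpose]; rfl
    _ ≤ (∑ j, |(b t ᵥ* bprod P 0 t) j|) * K₀
        + ∑ k ∈ range t, (∑ j, |(b t ᵥ* bprod P (k + 1) (t - k - 1)) j|) * ((⨆ i, Δ k i) * L) :=
        sum_abs_vecMul_le_of_eq_mul_sub P hrec (b t) hX₀
          (fun k => sum_abs_diagonal_mul_le (hΔ k) (hG k)) t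
    _ ≤ C * lam ^ t * B * K₀
        + ∑ k ∈ range t, C * lam ^ (t - k - 1) * B * ((⨆ i, Δ k i) * L) := by
        gcongr with k
        · exact hcontr t 0 t
        · exact mul_nonneg (Real.iSup_nonneg (hΔ k)) hL
        · exact hcontr t _ _
    _ = C * B * K₀ * lam ^ t
        + C * B * L * ∑ k ∈ range t, lam ^ (t - k - 1) * (⨆ i, Δ k i) := by
        rw [mul_sum (range t)]
        congr 1
        · ring
        · exact sum_congr rfl fun k _ => by ring
    _ ≤ _ := by
        have : 0 ≤ C * B * K₀ := by positivity
        have : 0 ≤ C * B * L := by positivity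
        gcongr <;> linarith

theorem disagreement_bound {N d : ℕ} (hN : 0 < N)
    (P : ℕ → Matrix (Fin N) (Fin N) ℝ)
    (hrs : ∀ t, (∀ i j, 0 ≤ P t i j) ∧ ∀ i, ∑ j, P t i j = 1)
    (C lam : ℝ) (hC : 0 < C) (hlam0 : 0 < lam) (hlam1 : lam < 1)
    (htau : ∀ t₀ k : ℕ, tau (bprod P t₀ k) ≤ C * lam ^ k)
    (X G : ℕ → Matrix (Fin N) (Fin d) ℝ) (L : ℝ)
    (hG : ∀ t i, ∑ j, |G t i j| ≤ L)
    (Δ : ℕ → Fin N → ℝ) (hΔ : ∀ t i, 0 ≤ Δ t i)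
    (M : ℝ) (hM : ∀ t i, Δ t i ≤ M)
    (hX : ∀ t i l, X (t + 1) i l = (∑ j, P t i j * X t j l) - Δ t i * G t i l)
    (b : ℕ → Fin N → ℝ) (B : ℝ)
    (hb1 : ∀ t, ∑ i, |b t i| ≤ B)
    (hb0 : ∀ t, ∑ i, b t i = 0) :
    ∃ C' : ℝ, 0 < C' ∧ ∀ t : ℕ, 1 ≤ t →
      (∑ l, |∑ i, X t i l * b t i|) ≤
        C' * lam ^ t + C' * ∑ k ∈ Finset.range t, lam ^ (t - k - 1) * (⨆ i, Δ k i) :=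
  disagreement_bound_general hN P C lam hC hlam0 htau X G L hG Δ hΔ hX b B hb1 hb0
end

section
/- Let {d(t)}_{t≥0} be nonnegative reals with Σ_{t=0}^∞ d(t)·sup_{ℓ≥t} d(ℓ) < ∞ and let 0 < λ < 1. Then Σ_{t=1}^∞ d(t)·(Σ_{k=0}^{t−1} d(k)·λ^{t−k−1}) < ∞ and lim_{t→∞} Σ_{k=0}^{t−1} λ^{t−k−1} d(k) = 0. -/
/-!
With `S k = sup_{ℓ ≥ k} d ℓ`, every pair `k ≤ t` satisfies `d t * d k ≤ d k * S k`, so the first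
series is dominated by the Cauchy product of the summable sequences `d * S` and `λ ^ j` (shifted by
one). Taking `k = t` shows that `d` is square summable, hence a null sequence, and the convolution
of a null sequence with a summable one is null: after reflecting the finite sums this is Tannery's
theorem.
-/

open Filter Finset Topology

section Convolution

variable {R : Type*} [NormedRing R] [CompleteSpace R] {f g : ℕ → R}

theorem summable_sum_range_mul_sub_one (hf : Summable fun k => ‖f k‖)
    (hg : Summable fun j => ‖g j‖) :
    Summable fun t => ∑ k ∈ range t, f k * g (t - k - 1) := by
  rw [← summable_nat_add_iff 1]
  simpa only [Nat.sub_right_comm _ _ 1, Nat.add_sub_cancel] using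
    (summable_norm_sum_mul_range_of_summable_norm hf hg).of_norm

theorem tendsto_sum_range_mul_sub_one_of_tendsto_zero (hf : Tendsto f atTop (𝓝 0))
    (hg : Summable fun j => ‖g j‖) :
    Tendsto (fun t => ∑ k ∈ range t, g (t - k - 1) * f k) atTop (𝓝 0) := by
  obtain ⟨C, hC⟩ := hf.norm.bddAbove_range
  have h_reflect (t : ℕ) : ∑ k ∈ range t, g (t - k - 1) * f k
      = ∑' j, if j < t then g j * f (t - 1 - j) else 0 := by
    rw [tsum_eq_sum (s := range t) fun j hj => if_neg (by simpa using hj),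
      ← sum_range_reflect]
    refine sum_congr rfl fun j hj => ?_
    rw [if_pos (mem_range.1 hj)]
    congr 2
    have := mem_range.1 hj
    omega
  simp_rw [h_reflect]
  have h_tannery := tendsto_tsum_of_dominated_convergence (𝓕 := atTop)
    (f := fun t j => if j < t then g j * f (t - 1 - j) else 0) (g := fun _ => (0 : R))
    (hg.mul_right C) (fun j => ?_) (Eventually.of_forall fun t j => ?_)
  · simpa using h_tannery
  · have h_shift : Tendsto (fun t => g j * f (t - 1 - j)) atTop (𝓝 0) := by
      simpa only [Nat.sub_sub, mul_zero, Function.comp_def] using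
        (hf.comp (tendsto_sub_atTop_nat (1 + j))).const_mul (g j)
    exact h_shift.congr' <| (eventually_gt_atTop j).mono fun t ht => (if_pos ht).symm
  · have hC0 : 0 ≤ C := (norm_nonneg _).trans (hC ⟨0, rfl⟩)
    split_ifs
    · exact (norm_mul_le _ _).trans (by gcongr; exact hC ⟨_, rfl⟩)
    · simpa using mul_nonneg (norm_nonneg (g j)) hC0

end Convolution

theorem Real.tendsto_zero_of_summable_sq {d : ℕ → ℝ} (h : Summable fun t => d t ^ 2) :
    Tendsto d atTop (𝓝 0) := by
  rw [tendsto_zero_iff_abs_tendsto_zero]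
  simpa [Function.comp_def, Real.sqrt_sq_eq_abs] using h.tendsto_atTop_zero.sqrt

theorem le_ciSup_nat_add {α : Type*} [ConditionallyCompleteLattice α] {d : ℕ → α}
    (hd : BddAbove (Set.range d)) {t m : ℕ} (h : t ≤ m) : d m ≤ ⨆ ℓ, d (t + ℓ) := by
  obtain ⟨ℓ, rfl⟩ := Nat.exists_eq_add_of_le h
  exact le_ciSup (hd.mono (Set.range_subset_iff.2 fun ℓ => Set.mem_range_self (t + ℓ))) ℓ

theorem stepsize_summability (d : ℕ → ℝ) (hd : ∀ t, 0 ≤ d t)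
    (hbdd : BddAbove (Set.range d))
    (hsum : Summable fun t => d t * ⨆ ℓ : ℕ, d (t + ℓ))
    (lam : ℝ) (hlam0 : 0 < lam) (hlam1 : lam < 1) :
    (Summable fun t => d t * ∑ k ∈ Finset.range t, d k * lam ^ (t - k - 1)) ∧
      Filter.Tendsto (fun t => ∑ k ∈ Finset.range t, lam ^ (t - k - 1) * d k)
        Filter.atTop (nhds 0) := by
  set S : ℕ → ℝ := fun t => ⨆ ℓ : ℕ, d (t + ℓ)
  have hdS {k t : ℕ} (hkt : k ≤ t) : d t ≤ S k := le_ciSup_nat_add hbdd hkt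
  have hpow (n : ℕ) : 0 ≤ lam ^ n := pow_nonneg hlam0.le n
  have hgeom : Summable fun j => ‖lam ^ j‖ := by
    simpa [abs_of_pos hlam0] using summable_geometric_of_lt_one hlam0.le hlam1
  have h_dominated (t : ℕ) : d t * ∑ k ∈ range t, d k * lam ^ (t - k - 1)
      ≤ ∑ k ∈ range t, d k * S k * lam ^ (t - k - 1) := by
    rw [mul_sum]
    refine sum_le_sum fun k hk => ?_
    calc d t * (d k * lam ^ (t - k - 1)) = d k * d t * lam ^ (t - k - 1) := by ring
      _ ≤ d k * S k * lam ^ (t - k - 1) := by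
        gcongr
        exacts [hd k, hdS (mem_range.1 hk).le]
  have hd_null : Tendsto d atTop (𝓝 0) := by
    refine Real.tendsto_zero_of_summable_sq <|
      Summable.of_nonneg_of_le (fun t => sq_nonneg _) (fun t => ?_) hsum
    rw [sq]
    exact mul_le_mul_of_nonneg_left (hdS le_rfl) (hd t)
  refine ⟨Summable.of_nonneg_of_le
    (fun t => mul_nonneg (hd t) (sum_nonneg fun k _ => mul_nonneg (hd k) (hpow _)))
    h_dominated (summable_sum_range_mul_sub_one ?_ hgeom),
    tendsto_sum_range_mul_sub_one_of_tendsto_zero hd_null hgeom⟩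
  simpa only [Real.norm_eq_abs] using hsum.abs
end

section
/- Let f : ℝ^d → ℝ be continuous with nonempty solution set X* of minimizers, and let {x(t)} ⊂ ℝ^d satisfy ‖x(t+1) − x*‖² ≤ (1 + b(t))‖x(t) − x*‖² − a(t)(f(x(t)) − f(x*)) + c(t) for all x* ∈ X* and t ≥ 0, where a(t), b(t), c(t) ≥ 0, Σ a(t) = ∞, Σ b(t) < ∞, Σ c(t) < ∞. Then x(t) converges to some point of X*. -/
open Filter Finset Real

private lemma quasi_aux {b c u : ℕ → ℝ} (hb : ∀ t, 0 ≤ b t) (hc : ∀ t, 0 ≤ c t)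
    (hu : ∀ t, 0 ≤ u t) (hbs : Summable b) (hcs : Summable c)
    (hrec : ∀ t, u (t + 1) ≤ (1 + b t) * u t + c t) :
    ∃ L, Tendsto u atTop (nhds L) := by
  set B : ℕ → ℝ := fun t => ∏ s ∈ Finset.range t, (1 + b s) with hBdef
  have hBsucc : ∀ t, B (t + 1) = B t * (1 + b t) := by
    intro t; simp [hBdef, Finset.prod_range_succ]
  have hB1 : ∀ t, (1 : ℝ) ≤ B t := by
    intro t
    induction t with
    | zero => simp [hBdef]
    | succ n ih => rw [hBsucc n]; nlinarith [hb n]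
  have hBpos : ∀ t, (0 : ℝ) < B t := fun t => lt_of_lt_of_le one_pos (hB1 t)
  have hBmono : Monotone B := by
    apply monotone_nat_of_le_succ
    intro t
    rw [hBsucc t]
    nlinarith [hBpos t, hb t]
  have hBbd : ∀ t, B t ≤ Real.exp (∑' s, b s) := by
    intro t
    calc B t ≤ ∏ s ∈ Finset.range t, Real.exp (b s) := by
          apply Finset.prod_le_prod
          · intro i _; linarith [hb i]
          · intro i _; linarith [Real.add_one_le_exp (b i)]
      _ = Real.exp (∑ s ∈ Finset.range t, b s) := by rw [Real.exp_sum]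
      _ ≤ Real.exp (∑' s, b s) := by
          apply Real.exp_le_exp.mpr
          exact Summable.sum_le_tsum _ (fun i _ => hb i) hbs
  have hBtend : Tendsto B atTop (nhds (⨆ t, B t)) :=
    tendsto_atTop_ciSup hBmono ⟨Real.exp (∑' s, b s), fun y ⟨t, ht⟩ => ht ▸ hBbd t⟩
  set w : ℕ → ℝ := fun t => u t / B t with hwdef
  have hw0 : ∀ t, 0 ≤ w t := fun t => div_nonneg (hu t) (hBpos t).le
  have hwrec : ∀ t, w (t + 1) ≤ w t + c t := by
    intro t
    have h1 : w (t + 1) ≤ ((1 + b t) * u t + c t) / B (t + 1) :=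
      div_le_div_of_nonneg_right (hrec t) (hBpos (t + 1)).le |>.trans_eq rfl
    have hb' : (0 : ℝ) < 1 + b t := by linarith [hb t]
    have h2 : ((1 + b t) * u t) / B (t + 1) = w t := by
      rw [hBsucc t, mul_comm (B t) (1 + b t), mul_div_mul_left _ _ hb'.ne']
    have h3 : c t / B (t + 1) ≤ c t := by
      apply div_le_self (hc t) (hB1 (t + 1))
    calc w (t + 1) ≤ ((1 + b t) * u t + c t) / B (t + 1) := h1
      _ = ((1 + b t) * u t) / B (t + 1) + c t / B (t + 1) := by ring
      _ ≤ w t + c t := by rw [h2]; linarith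
  set tail : ℕ → ℝ := fun t => ∑' s, c (s + t) with htaildef
  have htails : ∀ t, Summable fun s => c (s + t) := fun t => (summable_nat_add_iff t).mpr hcs
  have htail0 : ∀ t, 0 ≤ tail t := fun t => tsum_nonneg (fun s => hc _)
  have htailsucc : ∀ t, tail t = c t + tail (t + 1) := by
    intro t
    have := Summable.tsum_eq_zero_add (f := fun s => c (s + t)) (htails t)
    simp only [zero_add] at this
    rw [htaildef]
    simp only []
    rw [this]
    congr 1
    apply tsum_congr
    intro s
    congr 1
    omega
  set g : ℕ → ℝ := fun t => w t + tail t with hgdef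
  have hganti : Antitone g := by
    apply antitone_nat_of_succ_le
    intro t
    have := hwrec t
    have := htailsucc t
    simp only [hgdef]
    linarith
  have hgtend : Tendsto g atTop (nhds (⨅ t, g t)) :=
    tendsto_atTop_ciInf hganti ⟨0, fun y ⟨t, ht⟩ => ht ▸ add_nonneg (hw0 t) (htail0 t)⟩
  have htailtend : Tendsto tail atTop (nhds 0) := tendsto_sum_nat_add c
  have hwtend : Tendsto w atTop (nhds (⨅ t, g t)) := by
    have : Tendsto (fun t => g t - tail t) atTop (nhds ((⨅ t, g t) - 0)) :=
      hgtend.sub htailtend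
    simpa [hgdef] using this
  refine ⟨(⨅ t, g t) * (⨆ t, B t), ?_⟩
  have : Tendsto (fun t => w t * B t) atTop (nhds ((⨅ t, g t) * (⨆ t, B t))) :=
    hwtend.mul hBtend
  apply this.congr
  intro t
  rw [hwdef]
  show u t / B t * B t = u t
  rw [div_mul_cancel₀ _ (hBpos t).ne']

theorem quasi_fejer_convergence {d : ℕ}
    (f : EuclideanSpace ℝ (Fin d) → ℝ) (hf : Continuous f)
    (Xstar : Set (EuclideanSpace ℝ (Fin d)))
    (hXstar : Xstar = {y | ∀ z, f y ≤ f z}) (hne : Xstar.Nonempty)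
    (a b c : ℕ → ℝ) (ha : ∀ t, 0 ≤ a t) (hb : ∀ t, 0 ≤ b t) (hc : ∀ t, 0 ≤ c t)
    (hadiv : ¬ Summable a) (hbsum : Summable b) (hcsum : Summable c)
    (x : ℕ → EuclideanSpace ℝ (Fin d))
    (hrec : ∀ xs ∈ Xstar, ∀ t : ℕ,
      ‖x (t + 1) - xs‖ ^ 2 ≤ (1 + b t) * ‖x t - xs‖ ^ 2 - a t * (f (x t) - f xs) + c t) :
    ∃ p ∈ Xstar, Filter.Tendsto x Filter.atTop (nhds p) := by
  obtain ⟨xs, hxs⟩ := hne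
  have hmin : ∀ z, f xs ≤ f z := by rw [hXstar] at hxs; exact hxs
  set V : ℕ → ℝ := fun t => ‖x t - xs‖ ^ 2 with hVdef
  have hV0 : ∀ t, 0 ≤ V t := fun t => sq_nonneg _
  set e : ℕ → ℝ := fun t => f (x t) - f xs with hedef
  have he0 : ∀ t, 0 ≤ e t := fun t => by simp [hedef, hmin (x t)]
  have hVrec : ∀ t, V (t + 1) ≤ (1 + b t) * V t + c t := by
    intro t
    have := hrec xs hxs t
    have h2 : 0 ≤ a t * e t := mul_nonneg (ha t) (he0 t)
    simp only [hVdef, hedef] at *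
    linarith
  -- V converges, hence bounded
  obtain ⟨LV, hLV⟩ := quasi_aux hb hc hV0 hbsum hcsum hVrec
  obtain ⟨M, hM⟩ : ∃ M, ∀ t, V t ≤ M := by
    obtain ⟨M, hM⟩ := hLV.bddAbove_range
    exact ⟨M, fun t => hM ⟨t, rfl⟩⟩
  have hM0 : 0 ≤ M := le_trans (hV0 0) (hM 0)
  -- summability of a * e
  have hae : Summable (fun t => a t * e t) := by
    apply summable_of_sum_range_le (c := V 0 + M * (∑' t, b t) + ∑' t, c t)
      (fun t => mul_nonneg (ha t) (he0 t))
    intro n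
    have key : ∀ n, ∑ t ∈ Finset.range n, (a t * e t) ≤
        V 0 - V n + ∑ t ∈ Finset.range n, (b t * M + c t) := by
      intro n
      induction n with
      | zero => simp
      | succ n ih =>
        have h1 := hrec xs hxs n
        have h2 : a n * e n ≤ V n - V (n + 1) + (b n * M + c n) := by
          have hbV : b n * V n ≤ b n * M := mul_le_mul_of_nonneg_left (hM n) (hb n)
          simp only [hVdef, hedef] at *
          nlinarith
        rw [Finset.sum_range_succ, Finset.sum_range_succ]
        linarith
    have h3 : ∑ t ∈ Finset.range n, (b t * M + c t) ≤ M * (∑' t, b t) + ∑' t, c t := by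
      rw [Finset.sum_add_distrib]
      have hb' : ∑ t ∈ Finset.range n, b t * M ≤ M * ∑' t, b t := by
        rw [← Finset.sum_mul]
        rw [mul_comm]
        apply mul_le_mul_of_nonneg_left _ hM0
        exact Summable.sum_le_tsum _ (fun i _ => hb i) hbsum
      have hc' : ∑ t ∈ Finset.range n, c t ≤ ∑' t, c t :=
        Summable.sum_le_tsum _ (fun i _ => hc i) hcsum
      linarith
    have := key n
    have := hV0 n
    linarith
  -- frequently e is small
  have hfreq : ∀ ε : ℝ, 0 < ε → ∃ᶠ t in atTop, e t < ε := by
    intro ε hε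
    by_contra h
    rw [Filter.not_frequently] at h
    simp only [not_lt] at h
    rw [Filter.eventually_atTop] at h
    obtain ⟨N, hN⟩ := h
    apply hadiv
    rw [← summable_nat_add_iff N]
    refine Summable.of_nonneg_of_le (fun n => ha (n + N)) (fun n => ?_)
      ((((summable_nat_add_iff N).mpr hae)).mul_left ε⁻¹)
    have h1 : ε ≤ e (n + N) := hN _ (Nat.le_add_left N n)
    have h3 : a (n + N) * ε ≤ a (n + N) * e (n + N) :=
      mul_le_mul_of_nonneg_left h1 (ha _)
    have h4 := mul_le_mul_of_nonneg_left h3 (inv_nonneg.mpr hε.le)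
    calc a (n + N) = ε⁻¹ * (a (n + N) * ε) := by field_simp
      _ ≤ ε⁻¹ * (a (n + N) * e (n + N)) := h4
  -- subsequence with e → 0
  obtain ⟨φ, hφmono, hφ⟩ := Filter.extraction_forall_of_frequently
    (P := fun n k => e k < 1 / (n + 1)) (fun n => hfreq _ (by positivity))
  have heφ : Tendsto (fun k => e (φ k)) atTop (nhds 0) := by
    apply squeeze_zero (fun k => he0 _) (fun k => (hφ k).le)
    exact tendsto_one_div_add_atTop_nhds_zero_nat
  -- x i ∈ closed ball
  have hxball : ∀ t, x t ∈ Metric.closedBall xs (Real.sqrt M) := by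
    intro t
    rw [Metric.mem_closedBall, dist_eq_norm]
    have : ‖x t - xs‖ ^ 2 ≤ M := hM t
    nlinarith [norm_nonneg (x t - xs), Real.sq_sqrt hM0, Real.sqrt_nonneg M]
  obtain ⟨p, _, ψ, hψmono, hψ⟩ := tendsto_subseq_of_bounded
    Metric.isBounded_closedBall (x := fun k => x (φ k)) (fun k => hxball (φ k))
  -- f p = f xs
  have hfp : f p = f xs := by
    have h1 : Tendsto (fun j => f (x (φ (ψ j)))) atTop (nhds (f p)) :=
      (hf.tendsto p).comp hψ
    have h2 : Tendsto (fun j => f (x (φ (ψ j)))) atTop (nhds (f xs)) := by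
      have h3 : Tendsto (fun j => e (φ (ψ j))) atTop (nhds 0) :=
        heφ.comp hψmono.tendsto_atTop
      have h4 : Tendsto (fun j => e (φ (ψ j)) + f xs) atTop (nhds (0 + f xs)) :=
        h3.add tendsto_const_nhds
      simpa [hedef] using h4
    exact tendsto_nhds_unique h1 h2
  have hpX : p ∈ Xstar := by
    rw [hXstar]
    intro z
    rw [hfp]
    exact hmin z
  refine ⟨p, hpX, ?_⟩
  -- now use recursion with p
  set u : ℕ → ℝ := fun t => ‖x t - p‖ ^ 2 with hudef
  have hu0 : ∀ t, 0 ≤ u t := fun t => sq_nonneg _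
  have hmin' : ∀ z, f p ≤ f z := by rw [hXstar] at hpX; exact hpX
  have hurec : ∀ t, u (t + 1) ≤ (1 + b t) * u t + c t := by
    intro t
    have := hrec p hpX t
    have h2 : 0 ≤ a t * (f (x t) - f p) :=
      mul_nonneg (ha t) (by linarith [hmin' (x t)])
    simp only [hudef] at *
    linarith
  obtain ⟨L, hL⟩ := quasi_aux hb hc hu0 hbsum hcsum hurec
  have hLsub : Tendsto (fun j => u (φ (ψ j))) atTop (nhds L) :=
    hL.comp (hφmono.comp hψmono).tendsto_atTop
  have hLzero : Tendsto (fun j => u (φ (ψ j))) atTop (nhds 0) := by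
    have h1 : Tendsto (fun j => x (φ (ψ j)) - p) atTop (nhds (p - p)) :=
      hψ.sub tendsto_const_nhds
    rw [sub_self] at h1
    have h2 : Tendsto (fun j => ‖x (φ (ψ j)) - p‖ ^ 2) atTop (nhds (‖(0 : EuclideanSpace ℝ (Fin d))‖ ^ 2)) :=
      ((continuous_norm.pow 2).tendsto _).comp h1
    simpa [hudef] using h2
  have hL0 : L = 0 := tendsto_nhds_unique hLsub hLzero
  rw [hL0] at hL
  -- conclude x → p
  rw [tendsto_iff_norm_sub_tendsto_zero]
  have hsq : Tendsto (fun t => Real.sqrt (u t)) atTop (nhds (Real.sqrt 0)) :=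
    (Real.continuous_sqrt.tendsto _).comp hL
  rw [Real.sqrt_zero] at hsq
  apply hsq.congr
  intro t
  simp [hudef, Real.sqrt_sq_eq_abs]
end
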